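/- Symmetry identity ensuring compatibility of the constraint with KdV: Let k1, k2 be real numbers and let u, v : ℝ × ℝ → ℝ be smooth functions such that u satisfies the KdV equation u_t = u_xxx + 6u u_x and v satisfies v_x = u and v_t = u_xx + 3u². Define E := 3t·∂x(u_xxxx + 10u u_xx + 5u_x² + 10u³) + x·∂x(u_xx + 3u²) + 4u_xx + 8u² + 2u_x v + k1·(3t·∂x(u_xx + 3u²) + x u_x + 2u) + k2·(6t u_x + 1). Then ∂_t E = ∂_x³ E + 6u ∂_x E + 6u_x E identically on ℝ × ℝ. Consequently, the constraint E = 0 is compatible with the KdV flow. -/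

import Mathlib

/-- Partial derivative in the first (space) variable. -/
noncomputable def dx (f : ℝ → ℝ → ℝ) : ℝ → ℝ → ℝ := fun x t => deriv (fun x' => f x' t) x

/-- Partial derivative in the second (time) variable. -/
noncomputable def dt (f : ℝ → ℝ → ℝ) : ℝ → ℝ → ℝ := fun x t => deriv (fun t' => f x t') t

/-- The KdV equation `u_t = u_xxx + 6 u u_x`. -/
def KdV (u : ℝ → ℝ → ℝ) : Prop :=
  ∀ x t, dt u x t = dx (dx (dx u)) x t + 6 * u x t * dx u x t

/-- `v` is the potential of `u`: `v_x = u`, `v_t = u_xx + 3 u²`. -/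
def Potential (u v : ℝ → ℝ → ℝ) : Prop :=
  ∀ x t, dx v x t = u x t ∧ dt v x t = dx (dx u) x t + 3 * (u x t) ^ 2


/-- The left-hand side `E` of the stationary equation (eqt) for the linear
combination `u_{τ5} + k1 u_{τ3} + k2 u_{τ1}`, written in terms of `u` and the
potential `v`. -/
noncomputable def Efun (k1 k2 : ℝ) (u v : ℝ → ℝ → ℝ) : ℝ → ℝ → ℝ := fun x t =>
  3 * t * dx (fun x t => dx (dx (dx (dx u))) x t + 10 * u x t * dx (dx u) x t
      + 5 * (dx u x t) ^ 2 + 10 * (u x t) ^ 3) x t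
  + x * dx (fun x t => dx (dx u) x t + 3 * (u x t) ^ 2) x t
  + 4 * dx (dx u) x t + 8 * (u x t) ^ 2 + 2 * dx u x t * v x t
  + k1 * (3 * t * dx (fun x t => dx (dx u) x t + 3 * (u x t) ^ 2) x t
      + x * dx u x t + 2 * u x t)
  + k2 * (6 * t * dx u x t + 1)

/-! ### A small framework of smooth two-variable functions -/

/-- Pointwise sum of two-variable functions. -/
def fadd (f g : ℝ → ℝ → ℝ) : ℝ → ℝ → ℝ := fun x t => f x t + g x t
/-- Pointwise product of two-variable functions. -/
def fmul (f g : ℝ → ℝ → ℝ) : ℝ → ℝ → ℝ := fun x t => f x t * g x t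
/-- Constant two-variable function. -/
def fconst (c : ℝ) : ℝ → ℝ → ℝ := fun _ _ => c
/-- The coordinate function `x`. -/
def fX : ℝ → ℝ → ℝ := fun x _ => x
/-- The coordinate function `t`. -/
def fT : ℝ → ℝ → ℝ := fun _ t => t

/-- Smoothness of a curried two-variable function, as a typeclass. -/
class Sm (f : ℝ → ℝ → ℝ) : Prop where
  smooth : ContDiff ℝ (⊤ : ℕ∞) (Function.uncurry f)

namespace Sm

theorem hasDerivAt_x (f : ℝ → ℝ → ℝ) [hf : Sm f] (x t : ℝ) :
    HasDerivAt (fun x' => f x' t) (fderiv ℝ (Function.uncurry f) (x, t) (1, 0)) x := by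
  have h1 : HasFDerivAt (fun x' : ℝ => (x', t))
      ((ContinuousLinearMap.id ℝ ℝ).prod (0 : ℝ →L[ℝ] ℝ)) x :=
    HasFDerivAt.prodMk (hasFDerivAt_id x) (hasFDerivAt_const t x)
  have h2 := ((hf.smooth.differentiable (by simp) (x, t)).hasFDerivAt).comp x h1
  exact h2.hasDerivAt

theorem hasDerivAt_t (f : ℝ → ℝ → ℝ) [hf : Sm f] (x t : ℝ) :
    HasDerivAt (fun t' => f x t') (fderiv ℝ (Function.uncurry f) (x, t) (0, 1)) t := by
  have h1 : HasFDerivAt (fun t' : ℝ => (x, t'))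
      ((0 : ℝ →L[ℝ] ℝ).prod (ContinuousLinearMap.id ℝ ℝ)) t :=
    HasFDerivAt.prodMk (hasFDerivAt_const x t) (hasFDerivAt_id t)
  have h2 := ((hf.smooth.differentiable (by simp) (x, t)).hasFDerivAt).comp t h1
  exact h2.hasDerivAt

theorem dx_eq (f : ℝ → ℝ → ℝ) [Sm f] (x t : ℝ) :
    dx f x t = fderiv ℝ (Function.uncurry f) (x, t) (1, 0) :=
  (hasDerivAt_x f x t).deriv

theorem dt_eq (f : ℝ → ℝ → ℝ) [Sm f] (x t : ℝ) :
    dt f x t = fderiv ℝ (Function.uncurry f) (x, t) (0, 1) :=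
  (hasDerivAt_t f x t).deriv

theorem uncurry_dx (f : ℝ → ℝ → ℝ) [Sm f] :
    Function.uncurry (dx f) = fun p : ℝ × ℝ => fderiv ℝ (Function.uncurry f) p (1, 0) := by
  funext p; exact dx_eq f p.1 p.2

theorem uncurry_dt (f : ℝ → ℝ → ℝ) [Sm f] :
    Function.uncurry (dt f) = fun p : ℝ × ℝ => fderiv ℝ (Function.uncurry f) p (0, 1) := by
  funext p; exact dt_eq f p.1 p.2

theorem smooth_fderiv_apply (f : ℝ → ℝ → ℝ) [hf : Sm f] (c : ℝ × ℝ) :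
    ContDiff ℝ (⊤ : ℕ∞) (fun p : ℝ × ℝ => fderiv ℝ (Function.uncurry f) p c) :=
  (hf.smooth.fderiv_right (le_refl _)).clm_apply contDiff_const

instance instDx (f : ℝ → ℝ → ℝ) [Sm f] : Sm (dx f) :=
  ⟨by rw [uncurry_dx f]; exact smooth_fderiv_apply f _⟩

instance instDt (f : ℝ → ℝ → ℝ) [Sm f] : Sm (dt f) :=
  ⟨by rw [uncurry_dt f]; exact smooth_fderiv_apply f _⟩

instance instAdd (f g : ℝ → ℝ → ℝ) [hf : Sm f] [hg : Sm g] : Sm (fadd f g) :=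
  ⟨hf.smooth.add hg.smooth⟩

instance instMul (f g : ℝ → ℝ → ℝ) [hf : Sm f] [hg : Sm g] : Sm (fmul f g) :=
  ⟨hf.smooth.mul hg.smooth⟩

instance instConst (c : ℝ) : Sm (fconst c) := ⟨contDiff_const⟩
instance instX : Sm fX := ⟨contDiff_fst⟩
instance instT : Sm fT := ⟨contDiff_snd⟩

theorem fderiv_eval (F : ℝ × ℝ → ℝ) (hF : ContDiff ℝ (⊤ : ℕ∞) F) (c q w : ℝ × ℝ) :
    fderiv ℝ (fun p => fderiv ℝ F p c) q w = fderiv ℝ (fderiv ℝ F) q w c := by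
  have hd : DifferentiableAt ℝ (fderiv ℝ F) q :=
    ((hF.fderiv_right (m := (⊤ : ℕ∞)) (le_refl _)).differentiable (by simp)) q
  rw [fderiv_clm_apply hd (differentiableAt_const c)]
  simp

theorem symm2 (F : ℝ × ℝ → ℝ) (hF : ContDiff ℝ (⊤ : ℕ∞) F) (q v w : ℝ × ℝ) :
    fderiv ℝ (fderiv ℝ F) q v w = fderiv ℝ (fderiv ℝ F) q w v := by
  apply second_derivative_symmetric (f := F) (f' := fderiv ℝ F)
  · intro y; exact (hF.differentiable (by simp) y).hasFDerivAt
  · exact (((hF.fderiv_right (m := (⊤ : ℕ∞)) (le_refl _)).differentiable (by simp)) q).hasFDerivAt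

end Sm

/-! ### Rewrite rules for `dx` and `dt` on the combinators -/

theorem dt_dx (f : ℝ → ℝ → ℝ) [hf : Sm f] : dt (dx f) = dx (dt f) := by
  funext x t
  rw [Sm.dt_eq (dx f), Sm.dx_eq (dt f), Sm.uncurry_dx f, Sm.uncurry_dt f,
    Sm.fderiv_eval _ hf.smooth, Sm.fderiv_eval _ hf.smooth, Sm.symm2 _ hf.smooth]

theorem dx_fadd (f g : ℝ → ℝ → ℝ) [Sm f] [Sm g] : dx (fadd f g) = fadd (dx f) (dx g) := by
  funext x t
  show deriv (fun x' => f x' t + g x' t) x = dx f x t + dx g x t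
  rw [Sm.dx_eq f, Sm.dx_eq g]
  exact ((Sm.hasDerivAt_x f x t).add (Sm.hasDerivAt_x g x t)).deriv

theorem dt_fadd (f g : ℝ → ℝ → ℝ) [Sm f] [Sm g] : dt (fadd f g) = fadd (dt f) (dt g) := by
  funext x t
  show deriv (fun t' => f x t' + g x t') t = dt f x t + dt g x t
  rw [Sm.dt_eq f, Sm.dt_eq g]
  exact ((Sm.hasDerivAt_t f x t).add (Sm.hasDerivAt_t g x t)).deriv

theorem dx_fmul (f g : ℝ → ℝ → ℝ) [Sm f] [Sm g] :
    dx (fmul f g) = fadd (fmul (dx f) g) (fmul f (dx g)) := by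
  funext x t
  show deriv (fun x' => f x' t * g x' t) x = dx f x t * g x t + f x t * dx g x t
  rw [Sm.dx_eq f, Sm.dx_eq g]
  exact ((Sm.hasDerivAt_x f x t).mul (Sm.hasDerivAt_x g x t)).deriv

theorem dt_fmul (f g : ℝ → ℝ → ℝ) [Sm f] [Sm g] :
    dt (fmul f g) = fadd (fmul (dt f) g) (fmul f (dt g)) := by
  funext x t
  show deriv (fun t' => f x t' * g x t') t = dt f x t * g x t + f x t * dt g x t
  rw [Sm.dt_eq f, Sm.dt_eq g]
  exact ((Sm.hasDerivAt_t f x t).mul (Sm.hasDerivAt_t g x t)).deriv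

theorem dx_fconst (c : ℝ) : dx (fconst c) = fconst 0 := by
  funext x t; exact deriv_const x c

theorem dt_fconst (c : ℝ) : dt (fconst c) = fconst 0 := by
  funext x t; exact deriv_const t c

theorem dx_fX : dx fX = fconst 1 := by
  funext x t; exact deriv_id x

theorem dt_fX : dt fX = fconst 0 := by
  funext x t; exact deriv_const t x

theorem dx_fT : dx fT = fconst 0 := by
  funext x t; exact deriv_const x t

theorem dt_fT : dt fT = fconst 1 := by
  funext x t; exact deriv_id t


/-! ### Combinator form of `Efun` and the main computation -/

/-- Combinator form of `u_xxxx + 10 u u_xx + 5 u_x² + 10 u³`. -/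
noncomputable def C1 (u : ℝ → ℝ → ℝ) : ℝ → ℝ → ℝ :=
  fadd (fadd (fadd (dx (dx (dx (dx u)))) (fmul (fconst 10) (fmul u (dx (dx u)))))
    (fmul (fconst 5) (fmul (dx u) (dx u)))) (fmul (fconst 10) (fmul u (fmul u u)))

/-- Combinator form of `u_xx + 3 u²`. -/
noncomputable def C2 (u : ℝ → ℝ → ℝ) : ℝ → ℝ → ℝ :=
  fadd (dx (dx u)) (fmul (fconst 3) (fmul u u))

/-- Combinator form of `Efun`. -/
noncomputable def Ecomb (k1 k2 : ℝ) (u v : ℝ → ℝ → ℝ) : ℝ → ℝ → ℝ :=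
  fadd (fadd (fadd (fadd (fmul (fconst 3) (fmul fT (dx (C1 u)))) (fmul fX (dx (C2 u))))
    (fadd (fadd (fmul (fconst 4) (dx (dx u))) (fmul (fconst 8) (fmul u u)))
      (fmul (fconst 2) (fmul (dx u) v))))
    (fmul (fconst k1) (fadd (fadd (fmul (fconst 3) (fmul fT (dx (C2 u)))) (fmul fX (dx u)))
      (fmul (fconst 2) u))))
    (fmul (fconst k2) (fadd (fmul (fconst 6) (fmul fT (dx u))) (fconst 1)))

section
set_option maxHeartbeats 4000000
set_option synthInstance.maxHeartbeats 4000000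
set_option synthInstance.maxSize 40000

/-- Symmetry identity ensuring compatibility of the constraint with KdV:
`∂ₜ E = ∂ₓ³ E + 6 u ∂ₓ E + 6 uₓ E` for any KdV solution `u` with potential `v`. -/
theorem compatibility_identity (k1 k2 : ℝ) (u v : ℝ → ℝ → ℝ)
    (hu : ContDiff ℝ (⊤ : ℕ∞) (Function.uncurry u)) (hv : ContDiff ℝ (⊤ : ℕ∞) (Function.uncurry v))
    (hkdv : KdV u) (hpot : Potential u v) :
    ∀ x t, dt (Efun k1 k2 u v) x t =
      dx (dx (dx (Efun k1 k2 u v))) x t + 6 * u x t * dx (Efun k1 k2 u v) x t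
        + 6 * dx u x t * Efun k1 k2 u v x t := by
  haveI : Sm u := ⟨hu⟩
  haveI : Sm v := ⟨hv⟩
  have hdtu : dt u = fadd (dx (dx (dx u))) (fmul (fconst 6) (fmul u (dx u))) := by
    funext x t
    simp only [fadd, fmul, fconst]
    rw [hkdv x t]; ring
  have hdxv : dx v = u := by funext x t; exact (hpot x t).1
  have hdtv : dt v = fadd (dx (dx u)) (fmul (fconst 3) (fmul u u)) := by
    funext x t
    simp only [fadd, fmul, fconst]
    rw [(hpot x t).2]; ring
  have h1 : (fun x t => dx (dx (dx (dx u))) x t + 10 * u x t * dx (dx u) x t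
      + 5 * (dx u x t) ^ 2 + 10 * (u x t) ^ 3) = C1 u := by
    funext x t; simp only [C1, fadd, fmul, fconst]; ring
  have h2 : (fun x t => dx (dx u) x t + 3 * (u x t) ^ 2) = C2 u := by
    funext x t; simp only [C2, fadd, fmul, fconst]; ring
  have hE : Efun k1 k2 u v = Ecomb k1 k2 u v := by
    funext x t
    simp only [Efun]
    rw [h1, h2]
    simp only [Ecomb, fadd, fmul, fconst, fX, fT]
    ring
  rw [hE]
  intro x t
  simp only [Ecomb, C1, C2, dt_dx, dt_fadd, dt_fmul, dt_fconst, dt_fX, dt_fT, hdtu, hdtv,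
    dx_fadd, dx_fmul, dx_fconst, dx_fX, dx_fT, hdxv]
  simp only [fadd, fmul, fconst, fX, fT]
  ring

end
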